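/- arXiv:1811.03277 — 2 statements merged into one kernel-verified Lean document; each statement's English description precedes it below -/
import Mathlib

section
/- For any semiring S and natural number n, the generalized Kronecker delta δ_n^{a,b} := Σ_{i<n} |e_i⟩^{⊗b} ⟨e_i|^{⊗a} (where |e_i⟩ is the i-th standard basis column vector in S^n and ⟨e_i| the corresponding row vector) satisfies spider fusion: composing a spider with a outputs plus k 'internal' wires with another spider whose inputs include those k wires yields δ_n^{(a+c),(b+d)}. Formally: (id_n^{⊗b} ⊗ δ_n^{(k+c),d}) ∘ (δ_n^{a,(b+k)} ⊗ id_n^{⊗c}) = δ_n^{(a+c),(b+d)} for all a,b,c,d,k ∈ ℕ with k ≥ 1. -/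
open Matrix

/-- The generalized Kronecker delta `δ_n^{a,b} = Σ_{i<n} |e_i⟩^{⊗b} ⟨e_i|^{⊗a}`,
with output wires indexed by `α` and input wires indexed by `β`:
a matrix of size `n^|α| × n^|β|` over the semiring `S`. -/
def delta (S : Type*) [Semiring S] (n : ℕ) (α β : Type*) [Fintype α] [Fintype β] :
    Matrix (α → Fin n) (β → Fin n) S :=
  fun f g => ∑ i : Fin n,
    (if ∀ x, f x = i then (1 : S) else 0) * (if ∀ y, g y = i then (1 : S) else 0)

/-- Kronecker (tensor) product of matrices whose rows/columns are indexed by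
tuples of wires carrying `Fin n`. -/
def tensor {S : Type*} [Semiring S] {n : ℕ} {α β γ δ : Type*}
    (M : Matrix (α → Fin n) (β → Fin n) S) (N : Matrix (γ → Fin n) (δ → Fin n) S) :
    Matrix (α ⊕ γ → Fin n) (β ⊕ δ → Fin n) S :=
  fun f g => M (f ∘ Sum.inl) (g ∘ Sum.inl) * N (f ∘ Sum.inr) (g ∘ Sum.inr)

/-- Spider fusion:
`(id_n^{⊗b} ⊗ δ_n^{(k+c),d}) ∘ (δ_n^{a,(b+k)} ⊗ id_n^{⊗c}) = δ_n^{(a+c),(b+d)}`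
for all `a b c d k` with `k ≥ 1` (the associator of the tensor product is made
explicit as a `submatrix` reindexing). -/
theorem spider_fusion (S : Type*) [CommSemiring S] (n a b c d k : ℕ) (hk : 1 ≤ k) :
    (tensor (1 : Matrix (Fin b → Fin n) (Fin b → Fin n) S)
        (delta S n (Fin d) (Fin k ⊕ Fin c))) *
      ((tensor (delta S n (Fin b ⊕ Fin k) (Fin a))
          (1 : Matrix (Fin c → Fin n) (Fin c → Fin n) S)).submatrix
        (fun h : Fin b ⊕ (Fin k ⊕ Fin c) → Fin n =>
          h ∘ (Equiv.sumAssoc (Fin b) (Fin k) (Fin c)))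
        id)
    = delta S n (Fin b ⊕ Fin d) (Fin a ⊕ Fin c) := by
  ext f g
  rw [Matrix.mul_apply]
  simp only [tensor, delta, Matrix.submatrix_apply, Matrix.one_apply, id_eq,
    Function.comp, Equiv.sumAssoc_apply_inl_inl, Equiv.sumAssoc_apply_inl_inr,
    Equiv.sumAssoc_apply_inr, Finset.sum_mul, Finset.mul_sum,
    ite_zero_mul_ite_zero, one_mul, mul_one, funext_iff, Sum.forall]
  rw [Finset.sum_comm]
  refine Finset.sum_congr rfl fun j _ => ?_
  trans (∑ x : Fin b ⊕ (Fin k ⊕ Fin c) → Fin n, ∑ i : Fin n,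
    if (x = fun _ => j) ∧ i = j ∧
        (((∀ a : Fin b, f (Sum.inl a) = j) ∧ ∀ b1 : Fin d, f (Sum.inr b1) = j) ∧
          (∀ a1 : Fin a, g (Sum.inl a1) = j) ∧ ∀ b1 : Fin c, g (Sum.inr b1) = j)
      then (1 : S) else 0)
  · refine Finset.sum_congr rfl fun x _ => Finset.sum_congr rfl fun i _ =>
      if_congr ?_ rfl rfl
    constructor
    · rintro ⟨⟨h1, h2, h3, h4⟩, ⟨⟨h5, h6⟩, h7⟩, h8⟩
      have hij : i = j := (h3 ⟨0, hk⟩).symm.trans (h6 ⟨0, hk⟩)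
      refine ⟨funext fun z => ?_, hij, ⟨fun z => (h1 z).trans (h5 z),
        fun z => (h2 z).trans hij⟩, h7, fun z => (h8 z).symm.trans ((h4 z).trans hij)⟩
      rcases z with z | z | z
      · exact h5 z
      · exact h6 z
      · exact (h4 z).trans hij
    · rintro ⟨rfl, rfl, ⟨hf1, hf2⟩, hg1, hg2⟩
      exact ⟨⟨hf1, hf2, fun _ => rfl, fun _ => rfl⟩,
        ⟨⟨fun _ => rfl, fun _ => rfl⟩, hg1⟩, fun z => (hg2 z).symm⟩
  · simp [ite_and, Finset.sum_ite_eq']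
end

section
/- Precomposing the incidence matrix of a function with copy spiders: if μ : Fin k → E is a function such that the element e ∈ E has exactly i preimages under μ, then the restriction of the matching process !μ to the tensor factor of e acts as the copy spider δ_{|E|}^{1,i} on the state |e⟩, i.e. it outputs |e⟩^{⊗i}. -/
open Matrix

/-- The matching process `!μ`, the incidence matrix of
`f_μ(x_0, …, x_{N-1}) = (x_{μ(0)}, …, x_{μ(k-1)})`. -/
def matchProcess (S : Type*) [Semiring S] {N k : ℕ} (μ : Fin k → Fin N) :
    Matrix (Fin k → Fin N) ((Fin N) → Fin N) S :=
  Matrix.of fun g x => if (fun i => x (μ i)) = g then (1 : S) else 0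

/-- The entity-store `!E := ⊗_{e ∈ E} |e⟩`. -/
def entityStore (S : Type*) [CommSemiring S] (N : ℕ) :
    Matrix ((Fin N) → Fin N) Unit S :=
  Matrix.of fun x _ => ∏ e : Fin N, (if x e = e then (1 : S) else 0)

/-- The copy spider `δ_n^{1,i} := Σ_{e'<n} |e'⟩^{⊗i} ⟨e'|`. -/
def copySpider (S : Type*) [Semiring S] (n i : ℕ) :
    Matrix (Fin i → Fin n) (Fin n) S :=
  Matrix.of fun f j => ∑ e' : Fin n,
    (if ∀ x, f x = e' then (1 : S) else 0) * (if j = e' then (1 : S) else 0)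

/-- The one-hot column vector `|e⟩`. -/
def ket (S : Type*) [Semiring S] (n : ℕ) (e : Fin n) : Matrix (Fin n) Unit S :=
  Matrix.of fun j _ => if j = e then (1 : S) else 0

/-- If `e` has exactly `i` preimages under `μ`, then the restriction of the
matching process `!μ` (applied to the entity-store) to the output wires indexed
by the preimages of `e` acts as the copy spider `δ_{|E|}^{1,i}` on `|e⟩`,
i.e. it outputs `|e⟩^{⊗i}`. The collection of the output wires lying over `e`
is expressed by evaluating the output state at tuples that are arbitrary on
those wires and equal to the forced value `μ j` elsewhere, and the `i`
preimages are enumerated by an equivalence `ϕ : Fin i ≃ {j // μ j = e}`. -/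
theorem matchProcess_copies (S : Type*) [CommSemiring S] (N k i : ℕ)
    (μ : Fin k → Fin N) (e : Fin N)
    (hcard : Fintype.card {j : Fin k // μ j = e} = i)
    (ϕ : Fin i ≃ {j : Fin k // μ j = e}) :
    ∀ g : {j : Fin k // μ j = e} → Fin N,
      (matchProcess S μ * entityStore S N)
          (fun j => if h : μ j = e then g ⟨j, h⟩ else μ j) ()
        = (copySpider S N i * ket S N e) (fun a => g (ϕ a)) () := by
  intro g
  have hL : (matchProcess S μ * entityStore S N)
      (fun j => if h : μ j = e then g ⟨j, h⟩ else μ j) ()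
      = if (fun j => μ j) = (fun j => if h : μ j = e then g ⟨j, h⟩ else μ j)
        then (1 : S) else 0 := by
    rw [Matrix.mul_apply]
    have hp : ∀ x : Fin N → Fin N,
        (∏ e' : Fin N, (if x e' = e' then (1 : S) else 0))
          = if x = id then 1 else 0 := by
      intro x
      by_cases h : x = id
      · subst h; simp
      · rw [if_neg h]
        obtain ⟨a, ha⟩ := Function.ne_iff.mp h
        exact Finset.prod_eq_zero (Finset.mem_univ a) (if_neg ha)
    simp only [matchProcess, entityStore, Matrix.of_apply, hp, mul_ite, mul_one,
      mul_zero, ite_and]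
    rw [Finset.sum_ite_eq' Finset.univ id]
    simp
  have hR : (copySpider S N i * ket S N e) (fun a => g (ϕ a)) ()
      = if ∀ a : Fin i, g (ϕ a) = e then (1 : S) else 0 := by
    rw [Matrix.mul_apply]
    simp only [copySpider, ket, Matrix.of_apply, Finset.sum_mul, ite_mul, one_mul,
      zero_mul]
    rw [Finset.sum_comm]
    rw [Finset.sum_eq_single e]
    · simp
    · intro b _ hb
      apply Finset.sum_eq_zero
      intro j _
      by_cases hj : j = b
      · subst hj; simp [hb]
      · simp [hj]
    · simp
  rw [hL, hR]
  congr 1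
  simp only [eq_iff_iff]
  constructor
  · intro h a
    have := congrFun h (ϕ a).1
    rw [dif_pos (ϕ a).2] at this
    rw [← this, (ϕ a).2]
  · intro h
    funext j
    by_cases hj : μ j = e
    · rw [dif_pos hj, hj]
      obtain ⟨a, ha⟩ := ϕ.surjective ⟨j, hj⟩
      have := h a
      rw [ha] at this
      exact this.symm
    · rw [dif_neg hj]
end
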